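/- arXiv:2303.07770 — 4 statements merged into one kernel-verified Lean document; each statement's English description precedes it below -/
import Mathlib

section
/- With H exponential(1), X_1,...,X_{n-1} i.i.d. truncated exponential on [0,α] with density e^{-x}/(1-e^{-α}), all independent, and constants θ, P_T, P_J, σ² > 0 with K = θP_J/P_T, the probability P(P_T·H ≥ θ(P_J·(X_1+...+X_{n-1}) + σ²)) equals exp(-θσ²/P_T) · ((1 - e^{-α(1+K)}) / ((1+K)(1 - e^{-α})))^{n-1}. -/
/-!
Write `Y = θσ²/P_T + K ∑ X_i` for the rescaled interference, so the event is `Y ≤ H`. Since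
`Y ≥ 0` is independent of `H ~ Exp(1)`, conditioning on `Y` gives `P(Y ≤ H) = E[e^{-Y}]`, the
moment generating function of `Y` at `-1`. Independence of the `X_i` factors it as
`e^{-θσ²/P_T} ∏ E[e^{-K X_i}]`, and each factor is the elementary integral
`∫₀^α e^{-(1+K)x} dx / (1 - e^{-α})`.
-/

open MeasureTheory ProbabilityTheory Real Set

section

variable {Ω : Type*} [MeasurableSpace Ω] {μ : Measure Ω}

lemma ProbabilityTheory.iIndepFun.indepFun_sum_option_elim {ι β : Type*} [Fintype ι]
    [MeasurableSpace β] [AddCommMonoid β] [MeasurableAdd₂ β] {H : Ω → β} {X : ι → Ω → β}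
    (h : iIndepFun (fun o => Option.elim o H X) μ) (hH : Measurable H)
    (hX : ∀ i, Measurable (X i)) :
    IndepFun (∑ i, X i) H μ := by
  have hmeas : ∀ o, Measurable (Option.elim o H X) := by rintro (_ | i); exacts [hH, hX i]
  simpa [Finset.sum_map] using
    h.indepFun_finsetSum_of_notMem hmeas (s := Finset.univ.map .some) (i := none) (by simp)

lemma expMeasure_Ici {r y : ℝ} (hr : 0 < r) (hy : 0 ≤ y) :
    expMeasure r (Ici y) = ENNReal.ofReal (exp (-(r * y))) := by
  have := isProbabilityMeasure_expMeasure hr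
  have : NullSingletonClass (expMeasure r) :=
    ⟨fun x => withDensity_absolutelyContinuous _ _ (measure_singleton x)⟩
  have hexp : exp (-(r * y)) ≤ 1 := exp_le_one_iff.mpr (neg_nonpos.mpr (mul_nonneg hr.le hy))
  rw [← compl_Iio, prob_compl_eq_one_sub measurableSet_Iio, measure_congr Iio_ae_eq_Iic,
    ← ofReal_cdf, cdf_expMeasure_eq hr, if_pos hy, ← ENNReal.ofReal_one,
    ← ENNReal.ofReal_sub _ (by linarith)]
  ring_nf

lemma measure_le_eq_lintegral_map_Ici [IsFiniteMeasure μ] {Y H : Ω → ℝ} (hY : Measurable Y)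
    (hH : Measurable H) (hind : IndepFun Y H μ) :
    μ {ω | Y ω ≤ H ω} = ∫⁻ ω, μ.map H (Ici (Y ω)) ∂μ := by
  have hle : MeasurableSet {p : ℝ × ℝ | p.1 ≤ p.2} := measurableSet_le measurable_fst measurable_snd
  calc μ {ω | Y ω ≤ H ω}
      = μ.map (fun ω => (Y ω, H ω)) {p | p.1 ≤ p.2} := by
        rw [Measure.map_apply (hY.prodMk hH) hle]; rfl
    _ = ((μ.map Y).prod (μ.map H)) {p | p.1 ≤ p.2} := by
        rw [(indepFun_iff_map_prod_eq_prod_map_map hY.aemeasurable hH.aemeasurable).mp hind]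
    _ = ∫⁻ y, μ.map H (Ici y) ∂(μ.map Y) := Measure.prod_apply hle
    _ = ∫⁻ ω, μ.map H (Ici (Y ω)) ∂μ :=
        lintegral_map (measurable_measure_prodMk_left hle) hY

lemma measureReal_le_eq_mgf_of_map_eq_expMeasure [IsFiniteMeasure μ] {Y H : Ω → ℝ} {r : ℝ}
    (hr : 0 < r) (hY : Measurable Y) (hH : Measurable H) (hind : IndepFun Y H μ)
    (hHexp : μ.map H = expMeasure r) (hY_nonneg : 0 ≤ᵐ[μ] Y) :
    μ.real {ω | Y ω ≤ H ω} = mgf Y μ (-r) := by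
  have hint : ∫⁻ ω, μ.map H (Ici (Y ω)) ∂μ = ∫⁻ ω, ENNReal.ofReal (exp (-r * Y ω)) ∂μ := by
    refine lintegral_congr_ae ?_
    filter_upwards [hY_nonneg] with ω hω
    rw [hHexp, expMeasure_Ici hr hω, neg_mul]
  rw [measureReal_def, measure_le_eq_lintegral_map_Ici hY hH hind, hint, mgf,
    integral_eq_lintegral_of_nonneg_ae (ae_of_all _ fun ω => (exp_pos _).le)
      (hY.const_mul _).exp.aestronglyMeasurable]

lemma measureReal_add_mul_sum_le_eq_exp_mul_prod_mgf {ι : Type*} [Fintype ι]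
    {H : Ω → ℝ} {X : ι → Ω → ℝ} {r a K : ℝ} (hr : 0 < r) (ha : 0 ≤ a) (hK : 0 ≤ K)
    (hH : Measurable H) (hX : ∀ i, Measurable (X i)) (hHexp : μ.map H = expMeasure r)
    (hX_nonneg : ∀ i, ∀ᵐ ω ∂μ, 0 ≤ X i ω) (hindep : iIndepFun (fun o => Option.elim o H X) μ) :
    μ.real {ω | a + K * ∑ i, X i ω ≤ H ω} = exp (-(r * a)) * ∏ i, mgf (X i) μ (-(r * K)) := by
  have := hindep.isProbabilityMeasure
  set Y : Ω → ℝ := fun ω => a + K * (∑ i, X i) ω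
  have hYH : IndepFun Y H μ :=
    (hindep.indepFun_sum_option_elim hH hX).comp (φ := fun s => a + K * s) (ψ := id)
      (by fun_prop) measurable_id
  have hY_nonneg : 0 ≤ᵐ[μ] Y := by
    filter_upwards [ae_all_iff.mpr hX_nonneg] with ω hω
    have := Finset.sum_nonneg fun i (_ : i ∈ Finset.univ) => hω i
    simp only [Y, Finset.sum_apply, Pi.zero_apply]
    positivity
  have hXindep : iIndepFun X μ := hindep.precomp (g := some) (Option.some_injective _)
  simp_rw [← Finset.sum_apply]
  rw [measureReal_le_eq_mgf_of_map_eq_expMeasure hr (by fun_prop) hH hYH hHexp hY_nonneg,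
    mgf_const_add, mgf_const_mul, hXindep.mgf_sum hX]
  ring_nf

end

noncomputable def truncExpPDFReal (α x : ℝ) : ℝ :=
  if x ∈ Icc 0 α then exp (-x) / (1 - exp (-α)) else 0

noncomputable def truncExpMeasure (α : ℝ) : Measure ℝ :=
  volume.withDensity fun x => ENNReal.ofReal (truncExpPDFReal α x)

lemma measurable_truncExpPDFReal (α : ℝ) : Measurable (truncExpPDFReal α) :=
  Measurable.ite measurableSet_Icc (by fun_prop) measurable_const

lemma ae_nonneg_truncExpMeasure (α : ℝ) : ∀ᵐ x ∂truncExpMeasure α, 0 ≤ x := by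
  rw [truncExpMeasure,
    ae_withDensity_iff' (measurable_truncExpPDFReal α).ennreal_ofReal.aemeasurable]
  refine ae_of_all _ fun x hx => ?_
  by_contra hneg
  simp [truncExpPDFReal, show x ∉ Icc 0 α from fun h => hneg h.1] at hx

lemma mgf_id_truncExpMeasure {α t : ℝ} (hα : 0 ≤ α) (ht : t ≠ 1) :
    mgf id (truncExpMeasure α) t =
      (1 - exp (-α * (1 - t))) / ((1 - t) * (1 - exp (-α))) := by
  have hdens : ∀ x, (ENNReal.ofReal (truncExpPDFReal α x)).toReal • exp (t * x) =
      (Icc 0 α).indicator (fun x => (1 - exp (-α))⁻¹ * exp ((t - 1) * x)) x := by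
    intro x
    by_cases hx : x ∈ Icc 0 α
    · have hpos : 0 ≤ 1 - exp (-α) := sub_nonneg.mpr (exp_le_one_iff.mpr (by linarith))
      rw [truncExpPDFReal, if_pos hx, ENNReal.toReal_ofReal (by positivity), indicator_of_mem hx,
        smul_eq_mul, show (t - 1) * x = -x + t * x by ring, exp_add]
      ring
    · simp [truncExpPDFReal, hx]
  have ht' : t - 1 ≠ 0 := sub_ne_zero.mpr ht
  rw [mgf, truncExpMeasure, integral_withDensity_eq_integral_toReal_smul
    (measurable_truncExpPDFReal α).ennreal_ofReal (ae_of_all _ fun _ => ENNReal.ofReal_lt_top)]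
  simp only [id, hdens]
  rw [integral_indicator measurableSet_Icc, integral_Icc_eq_integral_Ioc,
    ← intervalIntegral.integral_of_le hα, intervalIntegral.integral_const_mul,
    intervalIntegral.integral_comp_mul_left (fun x => exp x) ht', integral_exp,
    smul_eq_mul, mul_zero, exp_zero, show -α * (1 - t) = (t - 1) * α by ring]
  field_simp
  ring

theorem sir_success_probability_RRS_general
    {Ω : Type*} [MeasurableSpace Ω] (μ : Measure Ω) [IsProbabilityMeasure μ]
    (n : ℕ)
    (H : Ω → ℝ) (X : Fin (n - 1) → Ω → ℝ)
    (hH : Measurable H) (hX : ∀ i, Measurable (X i))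
    (hHexp : Measure.map H μ = expMeasure 1)
    (α : ℝ) (hα : 0 < α)
    (hXdist : ∀ i, Measure.map (X i) μ =
      volume.withDensity (fun x => ENNReal.ofReal
        (if x ∈ Icc 0 α then Real.exp (-x) / (1 - Real.exp (-α)) else 0)))
    (hindep : iIndepFun
      (fun o : Option (Fin (n - 1)) => Option.elim o H X) μ)
    (θ P_T P_J σ2 : ℝ) (hθ : 0 < θ) (hPT : 0 < P_T) (hPJ : 0 < P_J) (hσ : 0 < σ2)
    (K : ℝ) (hK : K = θ * P_J / P_T) :
    (μ {ω | θ * (P_J * (∑ i, X i ω) + σ2) ≤ P_T * H ω}).toReal =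
      Real.exp (-θ * σ2 / P_T) *
        ((1 - Real.exp (-α * (1 + K))) / ((1 + K) * (1 - Real.exp (-α)))) ^ (n - 1) := by
  have hK_nonneg : 0 ≤ K := by rw [hK]; positivity
  have hevent : {ω | θ * (P_J * (∑ i, X i ω) + σ2) ≤ P_T * H ω} =
      {ω | θ * σ2 / P_T + K * ∑ i, X i ω ≤ H ω} := by
    ext ω
    have hrescale : θ * σ2 / P_T + K * ∑ i, X i ω = θ * (P_J * ∑ i, X i ω + σ2) / P_T := by
      rw [hK]; field_simp; ring
    rw [mem_ofPred_eq, mem_ofPred_eq, hrescale, div_le_iff₀ hPT, mul_comm P_T]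
  have hX_nonneg : ∀ i, ∀ᵐ ω ∂μ, 0 ≤ X i ω := fun i =>
    ae_of_ae_map (hX i).aemeasurable (by rw [hXdist i]; exact ae_nonneg_truncExpMeasure α)
  have hmgfX : ∀ i, mgf (X i) μ (-K) =
      (1 - Real.exp (-α * (1 + K))) / ((1 + K) * (1 - Real.exp (-α))) := fun i => by
    rw [← mgf_id_map (hX i).aemeasurable, hXdist i, ← sub_neg_eq_add]
    exact mgf_id_truncExpMeasure hα.le (by linarith)
  rw [← measureReal_def, hevent, measureReal_add_mul_sum_le_eq_exp_mul_prod_mgf one_pos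
    (by positivity) hK_nonneg hH hX hHexp hX_nonneg hindep]
  simp only [one_mul, hmgfX, Finset.prod_const, Finset.card_univ, Fintype.card_fin]
  congr 2
  ring

/-- With `H` exponential(1), `X 1, ..., X (n-1)` i.i.d. truncated exponential on `[0, α]`,
all independent, `K = θ * P_J / P_T`, the probability
`P(P_T * H ≥ θ * (P_J * (X 1 + ... + X (n-1)) + σ²))` equals
`exp (-θσ²/P_T) * ((1 - exp (-α(1+K))) / ((1+K)(1 - exp (-α))))^(n-1)`. -/
theorem sir_success_probability_RRS
    {Ω : Type*} [MeasurableSpace Ω] (μ : Measure Ω) [IsProbabilityMeasure μ]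
    (n : ℕ) (hn : 1 ≤ n)
    (H : Ω → ℝ) (X : Fin (n - 1) → Ω → ℝ)
    (hH : Measurable H) (hX : ∀ i, Measurable (X i))
    (hHexp : Measure.map H μ = expMeasure 1)
    (α : ℝ) (hα : 0 < α)
    (hXdist : ∀ i, Measure.map (X i) μ =
      volume.withDensity (fun x => ENNReal.ofReal
        (if x ∈ Icc 0 α then Real.exp (-x) / (1 - Real.exp (-α)) else 0)))
    (hindep : iIndepFun
      (fun o : Option (Fin (n - 1)) => Option.elim o H X) μ)
    (θ P_T P_J σ2 : ℝ) (hθ : 0 < θ) (hPT : 0 < P_T) (hPJ : 0 < P_J) (hσ : 0 < σ2)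
    (K : ℝ) (hK : K = θ * P_J / P_T) :
    (μ {ω | θ * (P_J * (∑ i, X i ω) + σ2) ≤ P_T * H ω}).toReal =
      Real.exp (-θ * σ2 / P_T) *
        ((1 - Real.exp (-α * (1 + K))) / ((1 + K) * (1 - Real.exp (-α)))) ^ (n - 1) :=
  sir_success_probability_RRS_general μ n H X hH hX hHexp α hα hXdist hindep θ P_T P_J σ2 hθ hPT hPJ
    hσ K hK
end

section
/- Under max-min relay selection among n relays with i.i.d. Exp(1) two-hop channel gains, the CDF of the selected relay's first-hop channel gain |h_{AC}|², conditioned on symmetry, is P(|h_{AC}|² < x) = ∫_0^x n e^{-t}(2e^{-t} - e^{-x})(1 - e^{-2t})^{n-1} dt. -/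
/-!
Write `M k = min (H k) (G k)`. The `M k` are i.i.d. with `P(M k < c) = 1 - e^(-2c)` and have no
ties almost surely, so up to a null set `{H_C < x}` is the disjoint union over `k` of the events
`{H k < x, M j < M k for all j ≠ k}`. As `(H k, G k)` is independent of the other `M j`, each has
probability `E[1{H k < x} (1 - e^(-2 M k))^(n-1)]`. Splitting this expectation according to
whether `H k` or `G k` is the minimum `t`, the density `e^(-t)` of the minimum coordinate gets
the weight `P(G k > t) + P(t ≤ H k < x) = 2e^(-t) - e^(-x)`.
-/

open MeasureTheory ProbabilityTheory Real intervalIntegral Set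
open scoped ENNReal

section ProdMin

variable {ν : Measure ℝ} [SFinite ν] {φ : ℝ → ℝ≥0∞}

theorem lintegral_prod_ite_fst_lt_fst_lt_snd (hφ : Measurable φ) (x : ℝ) :
    ∫⁻ p, (if p.1 < x ∧ p.1 < p.2 then φ p.1 else 0) ∂ν.prod ν =
      ∫⁻ t in Iio x, ν (Ioi t) * φ t ∂ν := by
  have hmeas : Measurable fun p : ℝ × ℝ ↦ if p.1 < x ∧ p.1 < p.2 then φ p.1 else 0 :=
    Measurable.ite ((measurableSet_lt measurable_fst measurable_const).inter
      (measurableSet_lt measurable_fst measurable_snd)) (hφ.comp measurable_fst) measurable_const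
  rw [lintegral_prod _ hmeas.aemeasurable, ← lintegral_indicator measurableSet_Iio]
  refine lintegral_congr fun h ↦ ?_
  by_cases hx : h < x
  · simp only [hx, true_and, indicator_of_mem (mem_Iio.2 hx)]
    rw [mul_comm, ← lintegral_indicator_const measurableSet_Ioi]
    rfl
  · simp [hx]

theorem lintegral_prod_ite_snd_le_fst_lt (hφ : Measurable φ) (x : ℝ) :
    ∫⁻ p, (if p.2 ≤ p.1 ∧ p.1 < x then φ p.2 else 0) ∂ν.prod ν =
      ∫⁻ t in Iio x, ν (Ico t x) * φ t ∂ν := by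
  have hmeas : Measurable fun p : ℝ × ℝ ↦ if p.1 ≤ p.2 ∧ p.2 < x then φ p.1 else 0 :=
    Measurable.ite ((measurableSet_le measurable_fst measurable_snd).inter
      (measurableSet_lt measurable_snd measurable_const)) (hφ.comp measurable_fst) measurable_const
  rw [← lintegral_prod_swap]
  simp only [Prod.fst_swap, Prod.snd_swap]
  rw [lintegral_prod _ hmeas.aemeasurable, setLIntegral_eq_of_support_subset]
  · refine lintegral_congr fun g ↦ ?_
    rw [mul_comm, ← lintegral_indicator_const measurableSet_Ico]
    simp only [indicator_apply, mem_Ico]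
  · intro g hg
    by_contra hx
    exact hg (by simp [Ico_eq_empty (show ¬g < x from hx)])

theorem lintegral_prod_ite_fst_lt_min (hφ : Measurable φ) (x : ℝ) :
    ∫⁻ p, (if p.1 < x then φ (min p.1 p.2) else 0) ∂ν.prod ν =
      ∫⁻ t in Iio x, (ν (Ioi t) + ν (Ico t x)) * φ t ∂ν := by
  have hsplit : ∀ p : ℝ × ℝ, (if p.1 < x then φ (min p.1 p.2) else 0) =
      (if p.1 < x ∧ p.1 < p.2 then φ p.1 else 0) +
        (if p.2 ≤ p.1 ∧ p.1 < x then φ p.2 else 0) := by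
    rintro ⟨h, g⟩
    by_cases hx : h < x
    · rcases lt_or_ge h g with hg | hg
      · simp [hx, hg, hg.not_ge, min_eq_left hg.le]
      · simp [hx, hg, hg.not_gt]
    · simp [hx]
  have hIoi : Measurable fun t ↦ ν (Ioi t) :=
    Antitone.measurable fun s t hst ↦ measure_mono (Ioi_subset_Ioi hst)
  have hfirst : Measurable fun p : ℝ × ℝ ↦ if p.1 < x ∧ p.1 < p.2 then φ p.1 else 0 :=
    Measurable.ite ((measurableSet_lt measurable_fst measurable_const).inter
      (measurableSet_lt measurable_fst measurable_snd)) (hφ.comp measurable_fst) measurable_const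
  simp_rw [hsplit, add_mul]
  rw [lintegral_add_left hfirst, lintegral_prod_ite_fst_lt_fst_lt_snd hφ,
    lintegral_prod_ite_snd_le_fst_lt hφ,
    ← lintegral_add_left (f := fun t ↦ ν (Ioi t) * φ t) (hIoi.mul hφ)]

end ProdMin

theorem MeasureTheory.Measure.prod_setOf_min_eq_eq_zero {ν ν' : Measure ℝ}
    [NullSingletonClass ν] [NullSingletonClass ν'] [SFinite ν'] (b : ℝ) :
    ν.prod ν' {p | min p.1 p.2 = b} = 0 := by
  refine measure_mono_null (t := {b} ×ˢ univ ∪ univ ×ˢ {b}) (fun p hp ↦ ?_) ?_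
  · rcases min_choice p.1 p.2 with h | h <;> simp_all
  · simp [measure_union_null_iff, Measure.prod_prod]

instance : IsProbabilityMeasure (expMeasure 1) := isProbabilityMeasure_expMeasure one_pos

instance (r : ℝ) : NullSingletonClass (expMeasure r) := by
  unfold expMeasure gammaMeasure; infer_instance

lemma cdf_expMeasure_one {t : ℝ} (ht : 0 ≤ t) : cdf (expMeasure 1) t = 1 - exp (-t) := by
  rw [cdf_expMeasure_eq one_pos, if_pos ht, one_mul]

lemma expMeasure_one_Ioi {t : ℝ} (ht : 0 ≤ t) :
    expMeasure 1 (Ioi t) = ENNReal.ofReal (exp (-t)) := by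
  rw [← measure_cdf (expMeasure 1), StieltjesFunction.measure_Ioi _ (tendsto_cdf_atTop _),
    cdf_expMeasure_one ht, sub_sub_cancel]

lemma expMeasure_one_Ico {t x : ℝ} (ht : 0 ≤ t) (htx : t ≤ x) :
    expMeasure 1 (Ico t x) = ENNReal.ofReal (exp (-t) - exp (-x)) := by
  rw [measure_congr Ico_ae_eq_Ioc, ← measure_cdf (expMeasure 1), StieltjesFunction.measure_Ioc,
    cdf_expMeasure_one ht, cdf_expMeasure_one (ht.trans htx), sub_sub_sub_cancel_left]

lemma setLIntegral_Iio_expMeasure_one (f : ℝ → ℝ≥0∞) (x : ℝ) :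
    ∫⁻ t in Iio x, f t ∂expMeasure 1 = ∫⁻ t in Ioc 0 x, ENNReal.ofReal (exp (-t)) * f t := by
  have hpdf : exponentialPDF 1 = (Ici 0).indicator fun t ↦ ENNReal.ofReal (exp (-t)) := by
    ext t
    by_cases ht : 0 ≤ t
    · simp [exponentialPDF_of_nonneg ht, ht]
    · simp [exponentialPDF_of_neg (not_le.1 ht), ht]
  have hmeas : Measurable (exponentialPDF 1) := (measurable_gammaPDFReal 1 1).ennreal_ofReal
  rw [show expMeasure 1 = volume.withDensity (exponentialPDF 1) from rfl,
    setLIntegral_withDensity_eq_setLIntegral_mul_non_measurable _ hmeas f measurableSet_Iio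
      (ae_of_all _ fun _ ↦ ENNReal.ofReal_lt_top), hpdf]
  simp only [Pi.mul_apply, ← indicator_mul_left]
  rw [setLIntegral_indicator measurableSet_Ici, Ici_inter_Iio, setLIntegral_congr Ico_ae_eq_Ioc]

lemma exp_neg_mul_two_exp_neg_sub_nonneg {t x : ℝ} (htx : t ≤ x) :
    0 ≤ exp (-t) * (2 * exp (-t) - exp (-x)) :=
  mul_nonneg (exp_pos _).le (by linarith [exp_pos (-t), exp_le_exp.2 (neg_le_neg htx)])

/- `φ` is only compared with `ofReal ∘ ψ` on `[0, x]`: this admits `φ c = ofReal (1 - e^(-2c)) ^ m`,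
which differs from `ofReal ((1 - e^(-2c)) ^ m)` at negative `c`. -/
lemma lintegral_expMeasure_prod_ite_fst_lt_min {φ : ℝ → ℝ≥0∞} (hφ : Measurable φ)
    {ψ : ℝ → ℝ} (hψ : Continuous ψ) {x : ℝ} (hx : 0 ≤ x)
    (hφψ : ∀ t ∈ Icc 0 x, φ t = ENNReal.ofReal (ψ t)) (hψ0 : ∀ t ∈ Icc 0 x, 0 ≤ ψ t) :
    ∫⁻ p, (if p.1 < x then φ (min p.1 p.2) else 0) ∂(expMeasure 1).prod (expMeasure 1) =
      ENNReal.ofReal (∫ t in 0..x, exp (-t) * (2 * exp (-t) - exp (-x)) * ψ t) := by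
  rw [lintegral_prod_ite_fst_lt_min hφ x, setLIntegral_Iio_expMeasure_one,
    intervalIntegral.integral_of_le hx, ofReal_integral_eq_lintegral_ofReal]
  · refine setLIntegral_congr_fun measurableSet_Ioc fun t ht ↦ ?_
    have hxt : exp (-x) ≤ exp (-t) := exp_le_exp.2 (neg_le_neg ht.2)
    rw [expMeasure_one_Ioi ht.1.le, expMeasure_one_Ico ht.1.le ht.2,
      hφψ t (Ioc_subset_Icc_self ht), ← ENNReal.ofReal_add (exp_pos _).le (sub_nonneg.2 hxt),
      ← ENNReal.ofReal_mul (by linarith [exp_pos (-t)]),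
      ← ENNReal.ofReal_mul (exp_pos _).le]
    ring_nf
  · exact (by fun_prop : Continuous fun t ↦ exp (-t) * (2 * exp (-t) - exp (-x)) * ψ t)
      |>.integrableOn_Icc.mono_set Ioc_subset_Icc_self
  · exact (ae_restrict_iff' measurableSet_Ioc).2 <| ae_of_all _ fun t ht ↦
      mul_nonneg (exp_neg_mul_two_exp_neg_sub_nonneg ht.2) (hψ0 t (Ioc_subset_Icc_self ht))

lemma expMeasure_one_prod_min_lt (c : ℝ) :
    (expMeasure 1).prod (expMeasure 1) {p | min p.1 p.2 < c} =
      ENNReal.ofReal (1 - exp (-2 * c)) := by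
  have hcompl : {p : ℝ × ℝ | min p.1 p.2 < c}ᶜ = Ici c ×ˢ Ici c := by
    ext; simp [Prod.le_def]
  have hmeas : MeasurableSet {p : ℝ × ℝ | min p.1 p.2 < c} :=
    measurableSet_lt (measurable_fst.min measurable_snd) measurable_const
  rw [← compl_compl {p : ℝ × ℝ | min p.1 p.2 < c}, prob_compl_eq_one_sub hmeas.compl, hcompl,
    Measure.prod_prod, ← measure_congr Ioi_ae_eq_Ici, ← measure_cdf (expMeasure 1),
    StieltjesFunction.measure_Ioi _ (tendsto_cdf_atTop _), cdf_expMeasure_eq one_pos]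
  split_ifs with hc
  · rw [one_mul, sub_sub_cancel, ← ENNReal.ofReal_mul (exp_pos _).le, ← exp_add,
      ← ENNReal.ofReal_one, ← ENNReal.ofReal_sub _ (exp_pos _).le]
    ring_nf
  · simp only [sub_zero, ENNReal.ofReal_one, one_mul, tsub_self]
    exact (ENNReal.ofReal_of_nonpos (sub_nonpos.2 (one_le_exp (by linarith)))).symm

section Independence

variable {Ω : Type*} [MeasurableSpace Ω] {μ : Measure Ω}

theorem ProbabilityTheory.iIndepFun.map_prodMk_sumElim {ι β : Type*} [MeasurableSpace β]
    {X Y : ι → Ω → β} (hX : ∀ i, Measurable (X i)) (hY : ∀ i, Measurable (Y i))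
    (h : iIndepFun (Sum.elim X Y) μ) (i : ι) :
    μ.map (fun ω ↦ (X i ω, Y i ω)) = (μ.map (X i)).prod (μ.map (Y i)) := by
  have := h.isProbabilityMeasure
  exact (indepFun_iff_map_prod_eq_prod_map_map (hX i).aemeasurable (hY i).aemeasurable).1
    (h.indepFun (i := .inl i) (j := .inr i) Sum.inl_ne_inr)

theorem ProbabilityTheory.iIndepFun.prodMk_sumElim {ι β : Type*} [Fintype ι]
    [MeasurableSpace β] {X Y : ι → Ω → β} (hX : ∀ i, Measurable (X i)) (hY : ∀ i, Measurable (Y i))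
    (h : iIndepFun (Sum.elim X Y) μ) :
    iIndepFun (fun i ω ↦ (X i ω, Y i ω)) μ := by
  have := h.isProbabilityMeasure
  have hXY : ∀ s, Measurable (Sum.elim X Y s) := fun s ↦ by cases s <;> simp [hX, hY]
  have hlaw := h.map_fun_eq_pi_map fun s ↦ (hXY s).aemeasurable
  have hsplit := (measurePreserving_sumPiEquivProdPi fun s ↦ μ.map (Sum.elim X Y s)).map_eq
  simp only [Sum.elim_inl, Sum.elim_inr] at hsplit
  rw [iIndepFun_iff_map_fun_eq_pi_map fun i ↦ ((hX i).prodMk (hY i)).aemeasurable]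
  simp_rw [h.map_prodMk_sumElim hX hY]
  rw [← (measurePreserving_arrowProdEquivProdArrow β β ι _ _).symm.map_eq, ← hsplit, ← hlaw,
    Measure.map_map, Measure.map_map]
  · rfl
  all_goals fun_prop

theorem ProbabilityTheory.IndepFun.measure_preimage_eq_lintegral {α β : Type*}
    [MeasurableSpace α] [MeasurableSpace β] [IsFiniteMeasure μ] {X : Ω → α} {Y : Ω → β}
    (hXY : IndepFun X Y μ) (hX : Measurable X) (hY : Measurable Y) {S : Set (α × β)}
    (hS : MeasurableSet S) :
    μ ((fun ω ↦ (X ω, Y ω)) ⁻¹' S) = ∫⁻ a, μ.map Y (Prod.mk a ⁻¹' S) ∂μ.map X := by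
  rw [← Measure.map_apply (hX.prodMk hY) hS,
    (indepFun_iff_map_prod_eq_prod_map_map hX.aemeasurable hY.aemeasurable).1 hXY,
    Measure.prod_apply hS]

theorem ProbabilityTheory.IndepFun.measure_eq_eq_zero {β : Type*} [MeasurableSpace β]
    [MeasurableEq β] [IsFiniteMeasure μ] {X Y : Ω → β}
    (hXY : IndepFun X Y μ) (hX : Measurable X) (hY : Measurable Y)
    (hY_atom : ∀ b, μ (Y ⁻¹' {b}) = 0) :
    μ {ω | X ω = Y ω} = 0 := by
  have := hXY.measure_preimage_eq_lintegral hX hY measurableSet_diagonal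
  simp_all [Set.preimage, Measure.map_apply hY (measurableSet_singleton _)]

theorem measure_argmax_eq_sum {ι : Type*} [Fintype ι] {M : ι → Ω → ℝ}
    (hM : ∀ i, Measurable (M i)) {C : Ω → ι} (hC : ∀ ω k, M k ω ≤ M (C ω) ω)
    (hties : ∀ i j, i ≠ j → μ {ω | M i ω = M j ω} = 0) {P : ι → Ω → Prop}
    (hP : ∀ k, MeasurableSet {ω | P k ω}) :
    μ {ω | P (C ω) ω} = ∑ k, μ ({ω | P k ω} ∩ {ω | ∀ j ≠ k, M j ω < M k ω}) := by
  have hae : ∀ᵐ ω ∂μ, ∀ i j, i ≠ j → M i ω ≠ M j ω := by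
    refine ae_all_iff.2 fun i ↦ ae_all_iff.2 fun j ↦ ?_
    by_cases hij : i = j
    · simp [hij]
    · exact (measure_eq_zero_iff_ae_notMem.1 (hties i j hij)).mono fun ω h _ ↦ h
  have hunion : {ω | P (C ω) ω} =ᵐ[μ] ⋃ k, {ω | P k ω} ∩ {ω | ∀ j ≠ k, M j ω < M k ω} := by
    filter_upwards [hae] with ω hω
    change P (C ω) ω = (ω ∈ ⋃ k, {ω | P k ω} ∩ {ω | ∀ j ≠ k, M j ω < M k ω})
    simp only [eq_iff_iff, mem_iUnion, mem_inter_iff, mem_ofPred_eq]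
    constructor
    · exact fun h ↦ ⟨C ω, h, fun j hj ↦ (hC ω j).lt_of_ne (hω j (C ω) hj)⟩
    · rintro ⟨k, hk, hmax⟩
      obtain rfl : C ω = k := by_contra fun h ↦ (hmax _ h).not_ge (hC ω k)
      exact hk
  rw [measure_congr hunion, measure_iUnion, tsum_fintype]
  · intro k l hkl
    exact disjoint_left.2 fun ω hk hl ↦ (hk.2 l hkl.symm).not_gt (hl.2 k hkl)
  · intro k
    refine (hP k).inter ?_
    simp only [ofPred_forall]
    exact .iInter fun j ↦ .iInter fun _ ↦ measurableSet_lt (hM j) (hM k)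

variable {ι : Type*} {Z : ι → Ω → ℝ × ℝ}

lemma measure_iInter_min_lt (hZ : ∀ i, Measurable (Z i)) (hindep : iIndepFun Z μ)
    (hlaw : ∀ i, μ.map (Z i) = (expMeasure 1).prod (expMeasure 1)) (s : Finset ι) (c : ℝ) :
    μ (⋂ j ∈ s, Z j ⁻¹' {p | min p.1 p.2 < c}) =
      ENNReal.ofReal (1 - exp (-2 * c)) ^ s.card := by
  have hS : MeasurableSet {p : ℝ × ℝ | min p.1 p.2 < c} :=
    measurableSet_lt (measurable_fst.min measurable_snd) measurable_const
  rw [hindep.measure_inter_preimage_eq_mul s fun _ _ ↦ hS, ← Finset.prod_const]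
  refine Finset.prod_congr rfl fun j _ ↦ ?_
  rw [← Measure.map_apply (hZ j) hS, hlaw, expMeasure_one_prod_min_lt]

lemma measure_fst_lt_and_strict_max [Fintype ι] [DecidableEq ι] (hZ : ∀ i, Measurable (Z i))
    (hindep : iIndepFun Z μ) (hlaw : ∀ i, μ.map (Z i) = (expMeasure 1).prod (expMeasure 1))
    (k : ι) (x : ℝ) :
    μ ({ω | (Z k ω).1 < x} ∩
        {ω | ∀ j ≠ k, min (Z j ω).1 (Z j ω).2 < min (Z k ω).1 (Z k ω).2}) =
      ∫⁻ p, (if p.1 < x then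
          ENNReal.ofReal (1 - exp (-2 * min p.1 p.2)) ^ (Fintype.card ι - 1) else 0)
        ∂(expMeasure 1).prod (expMeasure 1) := by
  have := hindep.isProbabilityMeasure
  set s : Finset ι := {k}ᶜ
  let Y : Ω → s → ℝ × ℝ := fun ω j ↦ Z j ω
  have hY : Measurable Y := measurable_pi_lambda _ fun j ↦ hZ j
  have hindepY : IndepFun (Z k) Y μ :=
    (hindep.indepFun_finset {k} s disjoint_compl_right hZ).comp
      (measurable_pi_apply (⟨k, Finset.mem_singleton_self k⟩ : ({k} : Finset ι)))
      measurable_id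
  let S : Set ((ℝ × ℝ) × (s → ℝ × ℝ)) :=
    {q | q.1.1 < x ∧ ∀ j, min (q.2 j).1 (q.2 j).2 < min q.1.1 q.1.2}
  have hS : MeasurableSet S := by
    measurability
  have hevent : {ω | (Z k ω).1 < x} ∩
      {ω | ∀ j ≠ k, min (Z j ω).1 (Z j ω).2 < min (Z k ω).1 (Z k ω).2} =
      (fun ω ↦ (Z k ω, Y ω)) ⁻¹' S := by
    ext ω; simp [S, Y, s]
  rw [hevent, hindepY.measure_preimage_eq_lintegral (hZ k) hY hS, hlaw k]
  refine lintegral_congr fun a ↦ ?_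
  split_ifs with ha
  · have hslice : Prod.mk a ⁻¹' S = {v | ∀ j, min (v j).1 (v j).2 < min a.1 a.2} := by
      ext v; simp [S, ha]
    have hpre : Y ⁻¹' {v | ∀ j, min (v j).1 (v j).2 < min a.1 a.2} =
        ⋂ j ∈ s, Z j ⁻¹' {p | min p.1 p.2 < min a.1 a.2} := by
      ext ω; simp [Y]
    rw [Measure.map_apply hY (hS.preimage measurable_prodMk_left), hslice, hpre,
      measure_iInter_min_lt hZ hindep hlaw, Finset.card_compl, Finset.card_singleton]
  · have hslice : Prod.mk a ⁻¹' S = ∅ := by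
      ext v; simp [S, ha]
    rw [hslice, measure_empty]

lemma measure_min_eq_min_eq_zero (hZ : ∀ i, Measurable (Z i)) (hindep : iIndepFun Z μ)
    (hlaw : ∀ i, μ.map (Z i) = (expMeasure 1).prod (expMeasure 1)) {i j : ι} (hij : i ≠ j) :
    μ {ω | min (Z i ω).1 (Z i ω).2 = min (Z j ω).1 (Z j ω).2} = 0 := by
  have := hindep.isProbabilityMeasure
  have hmin : Measurable fun p : ℝ × ℝ ↦ min p.1 p.2 := measurable_fst.min measurable_snd
  refine ((hindep.comp (fun _ ↦ _) fun _ ↦ hmin).indepFun hij).measure_eq_eq_zero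
    (hmin.comp (hZ i)) (hmin.comp (hZ j)) fun b ↦ ?_
  rw [preimage_comp, ← Measure.map_apply (hZ j) (hmin (measurableSet_singleton b)), hlaw]
  exact Measure.prod_setOf_min_eq_eq_zero b

end Independence

theorem mmrs_first_hop_cdf_general
    {Ω : Type*} [MeasurableSpace Ω] (μ : Measure Ω)
    (n : ℕ) (H G : Fin n → Ω → ℝ)
    (hH : ∀ k, Measurable (H k)) (hG : ∀ k, Measurable (G k))
    (hindep : iIndepFun (Sum.elim H G) μ)
    (hdist : ∀ s : Fin n ⊕ Fin n, Measure.map (Sum.elim H G s) μ = expMeasure 1)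
    (C : Ω → Fin n)
    (hsel : ∀ ω, ∀ k, min (H k ω) (G k ω) ≤ min (H (C ω) ω) (G (C ω) ω)) :
    ∀ x : ℝ, 0 ≤ x →
      (μ {ω | H (C ω) ω < x}).toReal =
        ∫ t in (0:ℝ)..x,
          n * Real.exp (-t) * (2 * Real.exp (-t) - Real.exp (-x))
            * (1 - Real.exp (-2 * t)) ^ (n - 1) := by
  intro x hx
  classical
  set Z : Fin n → Ω → ℝ × ℝ := fun k ω ↦ (H k ω, G k ω)
  have hZ : ∀ k, Measurable (Z k) := fun k ↦ (hH k).prodMk (hG k)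
  have hZindep : iIndepFun Z μ := hindep.prodMk_sumElim hH hG
  have hZlaw : ∀ k, μ.map (Z k) = (expMeasure 1).prod (expMeasure 1) := fun k ↦ by
    rw [hindep.map_prodMk_sumElim hH hG k, show μ.map (H k) = _ from hdist (.inl k),
      show μ.map (G k) = _ from hdist (.inr k)]
  have hF : ∀ t ∈ Icc 0 x, 0 ≤ 1 - exp (-2 * t) := fun t ht ↦
    sub_nonneg.2 (exp_le_one_iff.2 (by linarith [ht.1]))
  have hI0 : 0 ≤ ∫ t in 0..x,
      exp (-t) * (2 * exp (-t) - exp (-x)) * (1 - exp (-2 * t)) ^ (n - 1) :=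
    integral_nonneg hx fun t ht ↦
      mul_nonneg (exp_neg_mul_two_exp_neg_sub_nonneg ht.2) (pow_nonneg (hF t ht) _)
  have hlint := lintegral_expMeasure_prod_ite_fst_lt_min
    (φ := fun c ↦ ENNReal.ofReal (1 - exp (-2 * c)) ^ (n - 1)) (by fun_prop) (by fun_prop) hx
    (fun t ht ↦ (ENNReal.ofReal_pow (hF t ht) _).symm) fun t ht ↦ pow_nonneg (hF t ht) _
  change (μ {ω | (Z (C ω) ω).1 < x}).toReal = _
  rw [measure_argmax_eq_sum (M := fun k ω ↦ min (Z k ω).1 (Z k ω).2)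
    (fun k ↦ (hH k).min (hG k)) hsel
    (fun i j hij ↦ measure_min_eq_min_eq_zero hZ hZindep hZlaw hij)
    (P := fun k ω ↦ (Z k ω).1 < x) (fun k ↦ measurableSet_lt (hH k) measurable_const)]
  simp only [measure_fst_lt_and_strict_max hZ hZindep hZlaw, Finset.sum_const, Finset.card_univ,
    Fintype.card_fin, nsmul_eq_mul, hlint]
  rw [ENNReal.toReal_mul, ENNReal.toReal_natCast, ENNReal.toReal_ofReal hI0,
    ← intervalIntegral.integral_const_mul]
  congr 1 with t
  ring

/-- Under max-min relay selection among `n` relays with i.i.d. Exp(1) two-hop channel gains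
`H k, G k`, the CDF of the selected relay's first-hop gain is
`P(|h_AC|² < x) = ∫_0^x n e^(-t) (2 e^(-t) - e^(-x)) (1 - e^(-2t))^(n-1) dt`. -/
theorem mmrs_first_hop_cdf
    {Ω : Type*} [MeasurableSpace Ω] (μ : Measure Ω) [IsProbabilityMeasure μ]
    (n : ℕ) (hn : 1 ≤ n) (H G : Fin n → Ω → ℝ)
    (hH : ∀ k, Measurable (H k)) (hG : ∀ k, Measurable (G k))
    (hindep : iIndepFun (Sum.elim H G) μ)
    (hdist : ∀ s : Fin n ⊕ Fin n, Measure.map (Sum.elim H G s) μ = expMeasure 1)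
    (C : Ω → Fin n) (hC : Measurable C)
    (hsel : ∀ ω, ∀ k, min (H k ω) (G k ω) ≤ min (H (C ω) ω) (G (C ω) ω)) :
    ∀ x : ℝ, 0 ≤ x →
      (μ {ω | H (C ω) ω < x}).toReal =
        ∫ t in (0:ℝ)..x,
          n * Real.exp (-t) * (2 * Real.exp (-t) - Real.exp (-x))
            * (1 - Real.exp (-2 * t)) ^ (n - 1) :=
  mmrs_first_hop_cdf_general μ n H G hH hG hindep hdist C hsel
end

section
/- The integral identity ∫_0^x n e^{-t}(2e^{-t} - e^{-x})(1 - e^{-2t})^{n-1} dt = Σ_{k=0}^n C(n,k)(-1)^k (k e^{-x} + (k-1) e^{-2kx})/(2k-1) holds for all x ≥ 0 and integers n ≥ 1. -/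
open Real Finset intervalIntegral

lemma int_exp (a x : ℝ) (ha : a ≠ 0) :
    ∫ t in (0:ℝ)..x, Real.exp (a * t) = (Real.exp (a * x) - 1) / a := by
  have h : ∀ t ∈ Set.uIcc (0:ℝ) x,
      HasDerivAt (fun t => Real.exp (a * t) / a) (Real.exp (a * t)) t := by
    intro t _
    have h1 : HasDerivAt (fun t : ℝ => a * t) a t := by
      simpa using (hasDerivAt_id t).const_mul a
    have h3 := h1.exp.div_const a
    simpa [mul_div_assoc, div_self ha] using h3
  rw [intervalIntegral.integral_eq_sub_of_hasDerivAt h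
    ((Real.continuous_exp.comp (continuous_const.mul continuous_id)).intervalIntegrable 0 x)]
  simp [sub_div]

lemma alt_sum (m : ℕ) :
    ∑ j ∈ range (m + 1), ((m + 1).choose (j + 1) : ℝ) * (-1 : ℝ) ^ j = 1 := by
  have h := @Int.alternating_sum_range_choose (m + 1)
  rw [if_neg (Nat.succ_ne_zero m)] at h
  rw [Finset.sum_range_succ'] at h
  simp only [pow_zero, one_mul, Nat.choose_zero_right, Nat.cast_one] at h
  have h3 : (∑ j ∈ range (m + 1), ((m+1).choose (j+1) : ℤ) * (-1 : ℤ) ^ j) = 1 := by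
    have e : ∀ j ∈ range (m+1), ((m+1).choose (j+1) : ℤ) * (-1 : ℤ) ^ j
        = -((-1 : ℤ) ^ (j+1) * ((m+1).choose (j+1) : ℤ)) := fun j _ => by ring
    rw [Finset.sum_congr rfl e, Finset.sum_neg_distrib]
    omega
  exact_mod_cast congrArg (fun z : ℤ => (z : ℝ)) h3

/-- The integral identity
`∫_0^x n e^(-t)(2e^(-t) - e^(-x))(1 - e^(-2t))^(n-1) dt
  = Σ_{k=0}^n C(n,k) (-1)^k (k e^(-x) + (k-1) e^(-2kx)) / (2k-1)`
for all `x ≥ 0` and integers `n ≥ 1`. -/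
theorem mmrs_cdf_closed_form (n : ℕ) (hn : 1 ≤ n) (x : ℝ) (hx : 0 ≤ x) :
    ∫ t in (0:ℝ)..x,
        n * Real.exp (-t) * (2 * Real.exp (-t) - Real.exp (-x))
          * (1 - Real.exp (-2 * t)) ^ (n - 1) =
      ∑ k ∈ Finset.range (n + 1),
        (n.choose k : ℝ) * (-1 : ℝ) ^ k *
          ((k : ℝ) * Real.exp (-x) + ((k : ℝ) - 1) * Real.exp (-2 * (k : ℝ) * x))
            / (2 * (k : ℝ) - 1) := by
  obtain ⟨m, rfl⟩ : ∃ m, n = m + 1 := ⟨n - 1, (Nat.succ_pred_eq_of_pos hn).symm⟩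
  simp only [Nat.add_sub_cancel]
  -- Step 1: pointwise expansion of the integrand
  have hpt : ∀ t : ℝ,
      ((m + 1 : ℕ) : ℝ) * Real.exp (-t) * (2 * Real.exp (-t) - Real.exp (-x))
          * (1 - Real.exp (-2 * t)) ^ m
        = ∑ j ∈ range (m + 1),
            ((m + 1 : ℕ) : ℝ) * (m.choose j : ℝ) * (-1 : ℝ) ^ j *
              (2 * Real.exp (-(2 * (j:ℝ) + 2) * t)
                - Real.exp (-x) * Real.exp (-(2 * (j:ℝ) + 1) * t)) := by
    intro t
    have hb : (1 - Real.exp (-2 * t)) ^ m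
        = ∑ j ∈ range (m + 1),
            (-1 : ℝ) ^ j * Real.exp (-(2 * (j:ℝ)) * t) * (m.choose j : ℝ) := by
      rw [sub_eq_add_neg, add_comm, add_pow]
      refine Finset.sum_congr rfl fun j _ => ?_
      rw [one_pow, mul_one, neg_pow]
      have : Real.exp (-2 * t) ^ j = Real.exp (-(2 * (j:ℝ)) * t) := by
        rw [← Real.exp_nat_mul]; congr 1; ring
      rw [this]
    rw [hb, Finset.mul_sum]
    refine Finset.sum_congr rfl fun j _ => ?_
    have e1 : Real.exp (-(2 * (j:ℝ) + 2) * t)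
        = Real.exp (-t) * Real.exp (-t) * Real.exp (-(2 * (j:ℝ)) * t) := by
      rw [← Real.exp_add, ← Real.exp_add]; congr 1; ring
    have e2 : Real.exp (-(2 * (j:ℝ) + 1) * t)
        = Real.exp (-t) * Real.exp (-(2 * (j:ℝ)) * t) := by
      rw [← Real.exp_add]; congr 1; ring
    rw [e1, e2]; ring
  simp only [hpt]
  -- Step 2: interchange sum and integral
  rw [intervalIntegral.integral_finset_sum]
  swap
  · intro j _
    apply Continuous.intervalIntegrable
    fun_prop
  -- Step 3: evaluate each integral
  have hev : ∀ j ∈ range (m + 1),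
      (∫ t in (0:ℝ)..x,
          ((m + 1 : ℕ) : ℝ) * (m.choose j : ℝ) * (-1 : ℝ) ^ j *
            (2 * Real.exp (-(2 * (j:ℝ) + 2) * t)
              - Real.exp (-x) * Real.exp (-(2 * (j:ℝ) + 1) * t)))
        = ((m + 1 : ℕ) : ℝ) * (m.choose j : ℝ) * (-1 : ℝ) ^ j *
            (2 * ((Real.exp (-(2 * (j:ℝ) + 2) * x) - 1) / (-(2 * (j:ℝ) + 2)))
              - Real.exp (-x) *
                ((Real.exp (-(2 * (j:ℝ) + 1) * x) - 1) / (-(2 * (j:ℝ) + 1)))) := by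
    intro j _
    have hd2 : (-(2 * (j:ℝ) + 2)) ≠ 0 := by
      have h : (0:ℝ) < 2 * (j:ℝ) + 2 := by positivity
      exact neg_ne_zero.mpr h.ne'
    have hd1 : (-(2 * (j:ℝ) + 1)) ≠ 0 := by
      have h : (0:ℝ) < 2 * (j:ℝ) + 1 := by positivity
      exact neg_ne_zero.mpr h.ne'
    rw [intervalIntegral.integral_const_mul]
    rw [intervalIntegral.integral_sub
      ((by fun_prop : Continuous fun t : ℝ => 2 * Real.exp (-(2 * (j:ℝ) + 2) * t)).intervalIntegrable 0 x)
      ((by fun_prop : Continuous fun t : ℝ => Real.exp (-x) * Real.exp (-(2 * (j:ℝ) + 1) * t)).intervalIntegrable 0 x)]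
    rw [intervalIntegral.integral_const_mul, intervalIntegral.integral_const_mul,
      int_exp _ _ hd2, int_exp _ _ hd1]
  rw [Finset.sum_congr rfl hev]
  -- Step 4: reindex RHS and finish with algebra
  conv_rhs => rw [Finset.sum_range_succ']
  have h0 : (((m+1).choose 0 : ℝ) * (-1 : ℝ) ^ 0 *
      (((0:ℕ) : ℝ) * Real.exp (-x) + (((0:ℕ) : ℝ) - 1) * Real.exp (-2 * ((0:ℕ) : ℝ) * x))
        / (2 * ((0:ℕ) : ℝ) - 1)) = 1 := by
    norm_num
  rw [h0]
  have key : ∀ j ∈ range (m + 1),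
      ((m + 1 : ℕ) : ℝ) * (m.choose j : ℝ) * (-1 : ℝ) ^ j *
          (2 * ((Real.exp (-(2 * (j:ℝ) + 2) * x) - 1) / (-(2 * (j:ℝ) + 2)))
            - Real.exp (-x) *
              ((Real.exp (-(2 * (j:ℝ) + 1) * x) - 1) / (-(2 * (j:ℝ) + 1))))
        = ((m+1).choose (j+1) : ℝ) * (-1 : ℝ) ^ (j+1) *
            (((j+1 : ℕ) : ℝ) * Real.exp (-x)
              + (((j+1 : ℕ) : ℝ) - 1) * Real.exp (-2 * ((j+1 : ℕ) : ℝ) * x))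
              / (2 * ((j+1 : ℕ) : ℝ) - 1)
          + ((m + 1).choose (j + 1) : ℝ) * (-1 : ℝ) ^ j := by
    intro j _
    have hc : ((m + 1 : ℕ) : ℝ) * (m.choose j : ℝ)
        = ((m+1).choose (j+1) : ℝ) * ((j:ℝ) + 1) := by
      exact_mod_cast Nat.add_one_mul_choose_eq m j
    have e3 : Real.exp (-2 * (((j:ℕ)+1 : ℕ) : ℝ) * x) = Real.exp (-(2 * (j:ℝ) + 2) * x) := by
      congr 1; push_cast; ring
    have e4 : Real.exp (-x) * Real.exp (-(2 * (j:ℝ) + 1) * x)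
        = Real.exp (-(2 * (j:ℝ) + 2) * x) := by
      rw [← Real.exp_add]; congr 1; ring
    push_cast at e3 hc ⊢
    rw [e3, ← e4, hc, div_neg, div_neg,
      show 2 * ((j:ℝ) + 1) - 1 = 2 * (j:ℝ) + 1 by ring]
    have hd1 : (2 * (j:ℝ) + 1) ≠ 0 := by positivity
    have hd2 : (2 * (j:ℝ) + 2) ≠ 0 := by positivity
    field_simp
    ring
  rw [Finset.sum_congr rfl key, Finset.sum_add_distrib, alt_sum]
end

section
/- The transmission outage probability P_to(P_T) = 1 - exp(-θ(σ_C²+σ_B²)/P_T)·((1-e^{-α(1+θP_J/P_T)})/((1+θP_J/P_T)(1-e^{-α})))^{2n-2} is strictly decreasing in P_T for P_T > 0 (with θ, P_J, σ_C², σ_B², α > 0 and n ≥ 1 fixed). -/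
/-! The noise factor `exp (-θ(σ_C²+σ_B²)/P_T)` is positive and strictly increasing in `P_T`. The jamming
factor is `g(u) = (1 - e^{-αu}) / (u (1 - e^{-α}))` at `u = 1 + θP_J/P_T`, which decreases in `P_T`; and
`(1 - e^{-s}) / s` is the secant slope of the concave function `1 - e^{-s}` through `0`, hence
decreasing, so the jamming factor is positive and nondecreasing in `P_T`. The product is therefore
strictly increasing, and `P_to` strictly decreasing. -/

open Real Set

theorem StrictMonoOn.mul_monotoneOn {α M₀ : Type*} [Mul M₀] [Zero M₀] [Preorder M₀]
    [PosMulMono M₀] [MulPosStrictMono M₀] [Preorder α] {f g : α → M₀} {s : Set α}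
    (hf : StrictMonoOn f s) (hg : MonotoneOn g s) (hf₀ : ∀ x ∈ s, 0 ≤ f x)
    (hg₀ : ∀ x ∈ s, 0 < g x) : StrictMonoOn (f * g) s :=
  fun _ ha _ hb h ↦ mul_lt_mul (hf ha hb h) (hg ha hb h.le) (hg₀ _ ha) (hf₀ _ hb)

theorem strictMonoOn_exp_div_of_neg {c : ℝ} (hc : c < 0) :
    StrictMonoOn (fun x : ℝ => exp (c / x)) (Ioi 0) :=
  fun x hx y _ hxy => exp_lt_exp.mpr <| by
    have h := div_lt_div_of_pos_left (neg_pos.mpr hc) hx hxy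
    rw [neg_div, neg_div] at h
    linarith

theorem antitoneOn_one_add_div {k : ℝ} (hk : 0 ≤ k) :
    AntitoneOn (fun x : ℝ => 1 + k / x) (Ioi 0) :=
  fun _ hx _ _ hxy => add_le_add_right (div_le_div_of_nonneg_left hk hx hxy) 1

theorem one_sub_exp_neg_mul_pos {α u : ℝ} (hα : 0 < α) (hu : 0 < u) :
    0 < 1 - exp (-α * u) := by
  rw [sub_pos, exp_lt_one_iff]
  nlinarith

theorem antitoneOn_one_sub_exp_neg_div : AntitoneOn (fun s : ℝ => (1 - exp (-s)) / s) (Ioi 0) := by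
  intro x hx y hy hxy
  have hconv : ConvexOn ℝ univ (fun s : ℝ => exp (-s)) :=
    convexOn_exp.comp_linearMap (-LinearMap.id)
  have hslope := hconv.secant_mono (mem_univ 0) (mem_univ x) (mem_univ y) hx.ne' hy.ne' hxy
  simp only [neg_zero, exp_zero, sub_zero] at hslope
  have hneg : ∀ s : ℝ, (1 - exp (-s)) / s = -((exp (-s) - 1) / s) := fun s => by ring
  simp only [hneg]
  exact neg_le_neg hslope

theorem antitoneOn_one_sub_exp_neg_mul_div {α : ℝ} (hα : 0 < α) :
    AntitoneOn (fun u : ℝ => (1 - exp (-α * u)) / u) (Ioi 0) := by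
  intro x hx y hy hxy
  have hscale : ∀ u : ℝ, 0 < u → (1 - exp (-α * u)) / u = α * ((1 - exp (-(α * u))) / (α * u)) :=
    fun u hu => by field_simp
  simp only [hscale x hx, hscale y hy]
  exact mul_le_mul_of_nonneg_left (antitoneOn_one_sub_exp_neg_div (mul_pos hα hx)
    (mul_pos hα hy) (mul_le_mul_of_nonneg_left hxy hα.le)) hα.le

theorem monotoneOn_jamming_ratio {α k : ℝ} (hα : 0 < α) (hk : 0 ≤ k) :
    MonotoneOn (fun x : ℝ => (1 - exp (-α * (1 + k / x))) / ((1 + k / x) * (1 - exp (-α))))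
      (Ioi 0) := by
  have hmaps : MapsTo (fun x : ℝ => 1 + k / x) (Ioi 0) (Ioi 0) := fun x hx => by
    have : 0 ≤ k / x := div_nonneg hk (le_of_lt hx)
    simp only [mem_Ioi]; linarith
  have hcomp := (antitoneOn_one_sub_exp_neg_mul_div hα).comp (antitoneOn_one_add_div hk) hmaps
  have hden : 0 < 1 - exp (-α) := by simpa using one_sub_exp_neg_mul_pos hα one_pos
  intro x hx y hy hxy
  simp only [← div_div]
  exact div_le_div_of_nonneg_right (hcomp hx hy hxy) hden.le

theorem outage_strict_anti_in_power_general
    (n : ℕ) (θ P_J σC2 σB2 α : ℝ)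
    (hθ : 0 < θ) (hPJ : 0 < P_J) (hσC : 0 < σC2) (hσB : 0 < σB2) (hα : 0 < α)
    (P_to : ℝ → ℝ)
    (hPto : ∀ P_T, P_to P_T =
      1 - Real.exp (-θ * (σC2 + σB2) / P_T) *
        ((1 - Real.exp (-α * (1 + θ * P_J / P_T)))
          / ((1 + θ * P_J / P_T) * (1 - Real.exp (-α)))) ^ (2 * n - 2)) :
    StrictAntiOn P_to (Ioi 0) := by
  set F := fun x : ℝ => (1 - exp (-α * (1 + θ * P_J / x))) / ((1 + θ * P_J / x) * (1 - exp (-α)))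
  have hF : MonotoneOn F (Ioi 0) := monotoneOn_jamming_ratio hα (mul_pos hθ hPJ).le
  have hF₀ : ∀ x ∈ Ioi (0 : ℝ), 0 < F x := fun x hx => by
    have hu : 0 < 1 + θ * P_J / x := by have := hx.out; positivity
    exact div_pos (one_sub_exp_neg_mul_pos hα hu)
      (mul_pos hu (by simpa using one_sub_exp_neg_mul_pos hα one_pos))
  have hnoise : -θ * (σC2 + σB2) < 0 := by nlinarith
  have hprod := (strictMonoOn_exp_div_of_neg hnoise).mul_monotoneOn
    (fun a ha b hb h => pow_le_pow_left₀ (hF₀ a ha).le (hF ha hb h) (2 * n - 2))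
    (fun _ _ => (exp_pos _).le) (fun x hx => pow_pos (hF₀ x hx) (2 * n - 2))
  intro a ha b hb hab
  rw [hPto, hPto]
  exact sub_lt_sub_left (hprod ha hb hab) 1

/-- The transmission outage probability
`P_to(P_T) = 1 - exp (-θ(σ_C²+σ_B²)/P_T) * ((1-e^(-α(1+θP_J/P_T)))/((1+θP_J/P_T)(1-e^(-α))))^(2n-2)`
is strictly decreasing in `P_T` on `(0, ∞)`. -/
theorem outage_strict_anti_in_power
    (n : ℕ) (hn : 1 ≤ n) (θ P_J σC2 σB2 α : ℝ)
    (hθ : 0 < θ) (hPJ : 0 < P_J) (hσC : 0 < σC2) (hσB : 0 < σB2) (hα : 0 < α)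
    (P_to : ℝ → ℝ)
    (hPto : ∀ P_T, P_to P_T =
      1 - Real.exp (-θ * (σC2 + σB2) / P_T) *
        ((1 - Real.exp (-α * (1 + θ * P_J / P_T)))
          / ((1 + θ * P_J / P_T) * (1 - Real.exp (-α)))) ^ (2 * n - 2)) :
    StrictAntiOn P_to (Ioi 0) :=
  outage_strict_anti_in_power_general n θ P_J σC2 σB2 α hθ hPJ hσC hσB hα P_to hPto
end
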